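/- Let (T,d) be a compact metric space, m a Borel probability measure on T, φ a Young function with φ(1)=1, and R > 5. Fix s,t ∈ T with τ_{m,φ}(s,t) < ∞ and an integer l > c, and set A := 4R³/((R−1)(R−2)(R−5)) + 3R²/(2(R−5)). Then: d_τ(s,t) R^τ + Σ_{x∈{s,t}} Σ_{k=τ}^{l-1} r^l_k(x) R^k ≤ A · τ_{m,φ}(s,t). -/

import Mathlib

open MeasureTheory ENNReal Filter

noncomputable section

/-- A (finite) Young function: an increasing convex function `φ : [0,∞) → [0,∞)`
with `φ 0 = 0` and `φ x → ∞` as `x → ∞`. -/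
def IsYoungFunction (φ : ℝ → ℝ) : Prop :=
  MonotoneOn φ (Set.Ici 0) ∧ ConvexOn ℝ (Set.Ici 0) φ ∧ φ 0 = 0 ∧
    Tendsto φ atTop atTop

/-- Generalized inverse of a Young function, as a map `ℝ≥0∞ → ℝ≥0∞`
(so that in particular `φ⁻¹(∞) = ∞`). -/
def yinv (φ : ℝ → ℝ) (y : ℝ≥0∞) : ℝ≥0∞ :=
  sInf {x : ℝ≥0∞ | ∃ r : ℝ, 0 ≤ r ∧ x = ENNReal.ofReal r ∧ y ≤ ENNReal.ofReal (φ r)}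

/-- The minorizing metric
`τ_{m,φ}(s,t) = max_{x ∈ {s,t}} ∫_0^{d(s,t)} φ⁻¹(1 / m(B(x,ε))) dε`,
with the conventions `1/0 = ∞`, `φ⁻¹(∞) = ∞`. -/
def tauDist {T : Type*} [MetricSpace T] [MeasurableSpace T]
    (m : Measure T) (φ : ℝ → ℝ) (s t : T) : ℝ≥0∞ :=
  max (∫⁻ ε in Set.Ioc (0 : ℝ) (dist s t), yinv φ (1 / m (Metric.closedBall s ε)))
    (∫⁻ ε in Set.Ioc (0 : ℝ) (dist s t), yinv φ (1 / m (Metric.closedBall t ε)))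

/-- `f^d(u,v) = |f(u) - f(v)| / d(u,v)`, equal to `0` on the diagonal. -/
def fdiv {T : Type*} [MetricSpace T] (f : T → ℝ) (p : T × T) : ℝ :=
  |f p.1 - f p.2| / dist p.1 p.2

/-- The Luxemburg norm `|g|^ν_χ = inf {a > 0 : ∫ χ(|g|/a) dν ≤ 1}`, with value `∞`
if no such `a` exists. -/
def luxNorm {X : Type*} [MeasurableSpace X] (ν : Measure X) (χ : ℝ → ℝ)
    (g : X → ℝ) : ℝ≥0∞ :=
  sInf {a : ℝ≥0∞ | ∃ b : ℝ, 0 < b ∧ a = ENNReal.ofReal b ∧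
    ∫⁻ u, ENNReal.ofReal (χ (|g u| / b)) ∂ν ≤ 1}

/-- The Amemiya norm `‖g‖^μ_χ = inf_{a>0} a (1 + ∫ χ(|g|/a) dμ)`. -/
def amemiyaNorm {X : Type*} [MeasurableSpace X] (μ : Measure X) (χ : ℝ → ℝ)
    (g : X → ℝ) : ℝ≥0∞ :=
  sInf {c : ℝ≥0∞ | ∃ a : ℝ, 0 < a ∧
    c = ENNReal.ofReal a * (1 + ∫⁻ u, ENNReal.ofReal (χ (|g u| / a)) ∂μ)}

/-- `r_0(x) = D(T)` and, for `k ≥ 1`,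
`r_k(x) = min {ε ≥ 0 : 1 / m(B(x,ε)) ≤ φ(R^k)}` (with `1/0 = ∞`). -/
def rad {T : Type*} [MetricSpace T] [MeasurableSpace T]
    (m : Measure T) (φ : ℝ → ℝ) (R : ℝ) : ℕ → T → ℝ
  | 0, _ => Metric.diam (Set.univ : Set T)
  | k + 1, x => sInf {ε : ℝ | 0 ≤ ε ∧
      1 / m (Metric.closedBall x ε) ≤ ENNReal.ofReal (φ (R ^ (k + 1)))}

/-- `r^l_k(x) = ∑_{i=k}^{l} 2^(i-k) r_i(x)`. -/
def radl {T : Type*} [MetricSpace T] [MeasurableSpace T]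
    (m : Measure T) (φ : ℝ → ℝ) (R : ℝ) (k l : ℕ) (x : T) : ℝ :=
  ∑ i ∈ Finset.Icc k l, (2 : ℝ) ^ (i - k) * rad m φ R i x

/-- The averaging operator `S_k f (x) = (1 / m(B_k(x))) ∫_{B_k(x)} f dm`,
with the convention `0/0 = 0`. -/
def avg {T : Type*} [MetricSpace T] [MeasurableSpace T]
    (m : Measure T) (φ : ℝ → ℝ) (R : ℝ) (k : ℕ) (f : T → ℝ) (x : T) : ℝ :=
  (∫ u in Metric.closedBall x (rad m φ R k x), f u ∂m) /
    (m (Metric.closedBall x (rad m φ R k x))).toReal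

/-- The iterated averaging operator `iterAvg k l f = S_l S_{l-1} ⋯ S_k f` (for `k ≤ l`). -/
def iterAvg {T : Type*} [MetricSpace T] [MeasurableSpace T]
    (m : Measure T) (φ : ℝ → ℝ) (R : ℝ) (k : ℕ) : ℕ → (T → ℝ) → T → ℝ
  | 0, f => avg m φ R 0 f
  | l + 1, f =>
      if l + 1 ≤ k then avg m φ R (l + 1) f
      else avg m φ R (l + 1) (iterAvg m φ R k l f)

/-- The set `{k ≥ 1 : B^l_k(s) ∪ B^l_k(t) ⊆ B°(u, r_{k-1}(u)) for every u ∈ B^l_k(x)}`,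
whose greatest element is `τ_x`. -/
def tauSet {T : Type*} [MetricSpace T] [MeasurableSpace T]
    (m : Measure T) (φ : ℝ → ℝ) (R : ℝ) (l : ℕ) (s t x : T) : Set ℕ :=
  {k : ℕ | 1 ≤ k ∧ ∀ u ∈ Metric.closedBall x (radl m φ R k l x),
    Metric.closedBall s (radl m φ R k l s) ∪ Metric.closedBall t (radl m φ R k l t) ⊆
      Metric.ball u (rad m φ R (k - 1) u)}

/-!
Write `d = d(s,t)`, `μ_i = max(r_i(s), r_i(t))` and `β = max(c, 1)`. On `(r_{i+1}(x), r_i(x))`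
the integrand of `τ_{m,φ}` is at least `R^i`; integrating over `(0, d]` and summing by parts,
`R τ_{m,φ}(s,t)` dominates `(R - 1) ∑_{i ≥ β} r_i(x) R^i` for both points, and also `d R^β` for
the point with `d ≤ r_{β-1}`. Below `β`, maximality of `τ` yields
`μ_i ≤ 2d + 3 ∑_{j > i} 2^(j-i-1) μ_j` for `τ ≤ i < β`. Against the weights `R^i` the dyadic sums
cost a factor `R/(R-2)`, so for `R > 5` the indices in `[τ, β)` are absorbed. Collecting terms,
`(R - 5)` times the left-hand side is at most `R (R + 7) τ_{m,φ}(s,t)`, and `R (R + 7)/(R - 5) ≤ A`.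
-/

open Metric

section YoungInverse

variable {φ : ℝ → ℝ}

theorem IsYoungFunction.one_le_yinv (hφ : IsYoungFunction φ) (hφ1 : φ 1 = 1) {y : ℝ≥0∞}
    (hy : 1 ≤ y) : 1 ≤ yinv φ y := by
  refine le_sInf ?_
  rintro _ ⟨r, hr0, rfl, hyr⟩
  have hφr : 1 ≤ φ r := ENNReal.one_le_ofReal.1 (hy.trans hyr)
  refine ENNReal.one_le_ofReal.2 (not_lt.1 fun hr1 => ?_)
  -- convexity between `φ 0 = 0` and `φ 1 = 1` gives `φ r ≤ r` on `[0, 1]`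
  have := hφ.2.1.2 Set.self_mem_Ici (Set.mem_Ici.2 zero_le_one) (sub_nonneg.2 hr1.le) hr0
    (sub_add_cancel 1 r)
  simp only [smul_eq_mul, mul_zero, mul_one, zero_add, hφ.2.2.1, hφ1] at this
  linarith

theorem ofReal_le_yinv (hφ : MonotoneOn φ (Set.Ici 0)) {a : ℝ} (ha : 0 ≤ a) {y : ℝ≥0∞}
    (hy : ENNReal.ofReal (φ a) < y) : ENNReal.ofReal a ≤ yinv φ y := by
  refine le_sInf ?_
  rintro _ ⟨r, hr0, rfl, hyr⟩
  refine ENNReal.ofReal_le_ofReal (not_lt.1 fun hra => ?_)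
  exact (hy.trans_le hyr).not_ge (ENNReal.ofReal_le_ofReal (hφ hr0 ha hra.le))

end YoungInverse

section Radius

variable {T : Type*} [MetricSpace T] [MeasurableSpace T] {m : Measure T} {φ : ℝ → ℝ} {R : ℝ}

def radSet (m : Measure T) (φ : ℝ → ℝ) (c : ℝ) (x : T) : Set ℝ :=
  {ε : ℝ | 0 ≤ ε ∧ 1 / m (closedBall x ε) ≤ ENNReal.ofReal (φ c)}

theorem rad_nonneg (k : ℕ) (x : T) : 0 ≤ rad m φ R k x := by
  cases k with
  | zero => exact diam_nonneg
  | succ k => exact Real.sInf_nonneg fun _ h => h.1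

theorem radSet_bddBelow (c : ℝ) (x : T) : BddBelow (radSet m φ c x) :=
  ⟨0, fun _ h => h.1⟩

theorem ofReal_pow_le_yinv_of_lt_rad [IsProbabilityMeasure m] (hφ : IsYoungFunction φ)
    (hφ1 : φ 1 = 1) (hR : 0 ≤ R) {k : ℕ} {x : T} {ε : ℝ} (hε : 0 ≤ ε) (hεk : ε < rad m φ R k x) :
    ENNReal.ofReal (R ^ k) ≤ yinv φ (1 / m (closedBall x ε)) := by
  cases k with
  | zero =>
    rw [pow_zero, ENNReal.ofReal_one]
    exact hφ.one_le_yinv hφ1 (one_div (m _) ▸ ENNReal.one_le_inv.2 prob_le_one)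
  | succ k =>
    refine ofReal_le_yinv hφ.1 (by positivity) (not_le.1 fun hle => hεk.not_ge ?_)
    exact csInf_le (radSet_bddBelow _ x) ⟨hε, hle⟩

variable [BoundedSpace T] [IsProbabilityMeasure m]

theorem diam_mem_radSet (hφ : MonotoneOn φ (Set.Ici 0)) (hφ1 : φ 1 = 1) {c : ℝ} (hc : 1 ≤ c)
    (x : T) : diam (Set.univ : Set T) ∈ radSet m φ c x := by
  refine ⟨diam_nonneg, ?_⟩
  have hball : closedBall x (diam (Set.univ : Set T)) = Set.univ :=
    Set.eq_univ_of_forall fun y =>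
      dist_le_diam_of_mem (Bornology.IsBounded.all _) (Set.mem_univ y) (Set.mem_univ x)
  rw [hball, measure_univ, div_one, ENNReal.one_le_ofReal]
  exact hφ1.symm.le.trans (hφ (Set.mem_Ici.2 zero_le_one) (Set.mem_Ici.2 (zero_le_one.trans hc)) hc)

theorem radSet_nonempty (hφ : MonotoneOn φ (Set.Ici 0)) (hφ1 : φ 1 = 1) (hR : 1 ≤ R) (k : ℕ)
    (x : T) : (radSet m φ (R ^ k) x).Nonempty :=
  ⟨_, diam_mem_radSet hφ hφ1 (one_le_pow₀ hR) x⟩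

theorem rad_le_diam (hφ : MonotoneOn φ (Set.Ici 0)) (hφ1 : φ 1 = 1) (hR : 1 ≤ R) (k : ℕ)
    (x : T) : rad m φ R k x ≤ diam (Set.univ : Set T) := by
  cases k with
  | zero => exact le_rfl
  | succ k => exact csInf_le (radSet_bddBelow _ x) (diam_mem_radSet hφ hφ1 (one_le_pow₀ hR) x)

theorem rad_antitone (hφ : MonotoneOn φ (Set.Ici 0)) (hφ1 : φ 1 = 1) (hR : 1 ≤ R) (x : T) :
    Antitone fun k => rad m φ R k x := by
  refine antitone_nat_of_succ_le fun k => ?_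
  cases k with
  | zero => exact rad_le_diam hφ hφ1 hR 1 x
  | succ k =>
    refine csInf_le_csInf (radSet_bddBelow _ x) (radSet_nonempty hφ hφ1 hR _ x) ?_
    refine fun ε hε => ⟨hε.1, hε.2.trans (ENNReal.ofReal_le_ofReal ?_)⟩
    exact hφ (Set.mem_Ici.2 (by positivity)) (Set.mem_Ici.2 (by positivity))
      (pow_le_pow_right₀ hR k.succ.le_succ)

/-- The infimum defining `rad` is attained, since `ε ↦ m (closedBall x ε)` is right-continuous. -/
theorem one_div_measure_closedBall_rad_le [OpensMeasurableSpace T]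
    (hφ : MonotoneOn φ (Set.Ici 0)) (hφ1 : φ 1 = 1) (hR : 1 ≤ R) (k : ℕ) (x : T) :
    1 / m (closedBall x (rad m φ R (k + 1) x)) ≤ ENNReal.ofReal (φ (R ^ (k + 1))) := by
  set r := rad m φ R (k + 1) x
  rw [one_div, ENNReal.inv_le_iff_inv_le]
  have hlim := tendsto_measure_biInter_gt (μ := m) (s := closedBall x) (a := r)
    (fun _ _ => measurableSet_closedBall.nullMeasurableSet)
    (fun _ _ _ hij => closedBall_subset_closedBall hij) ⟨r + 1, by linarith, measure_ne_top _ _⟩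
  rw [biInter_gt_closedBall] at hlim
  refine ge_of_tendsto hlim (eventually_nhdsWithin_of_forall fun ε (hε : r < ε) => ?_)
  obtain ⟨a, ha, haε⟩ := exists_lt_of_csInf_lt (radSet_nonempty hφ hφ1 hR _ x) hε
  have hma := ha.2
  rw [one_div, ENNReal.inv_le_iff_inv_le] at hma
  exact hma.trans (measure_mono (closedBall_subset_closedBall haε.le))

theorem rad_le_rad_add_dist [OpensMeasurableSpace T] (hφ : MonotoneOn φ (Set.Ici 0))
    (hφ1 : φ 1 = 1) (hR : 1 ≤ R) (k : ℕ) (u y : T) :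
    rad m φ R k y ≤ rad m φ R k u + dist u y := by
  cases k with
  | zero => exact le_add_of_nonneg_right dist_nonneg
  | succ k =>
    refine csInf_le (radSet_bddBelow _ y) ⟨add_nonneg (rad_nonneg _ _) dist_nonneg, ?_⟩
    refine le_trans ?_ (one_div_measure_closedBall_rad_le (m := m) hφ hφ1 hR k u)
    gcongr
    intro w hw
    rw [mem_closedBall] at hw ⊢
    linarith [dist_triangle w u y]

end Radius

theorem ofReal_mul_le_setLIntegral_Ioc {f : ℝ → ℝ≥0∞} {a b c : ℝ} (hc : 0 ≤ c)
    (hf : ∀ ε ∈ Set.Ioo a b, ENNReal.ofReal c ≤ f ε) :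
    ENNReal.ofReal ((b - a) * c) ≤ ∫⁻ ε in Set.Ioc a b, f ε :=
  calc ENNReal.ofReal ((b - a) * c) = ∫⁻ _ in Set.Ioo a b, ENNReal.ofReal c := by
        rw [setLIntegral_const, Real.volume_Ioo, ← ENNReal.ofReal_mul hc, mul_comm]
    _ ≤ ∫⁻ ε in Set.Ioo a b, f ε := setLIntegral_mono' measurableSet_Ioo hf
    _ ≤ ∫⁻ ε in Set.Ioc a b, f ε := lintegral_mono_set Set.Ioo_subset_Ioc_self

theorem setLIntegral_Ioc_add (f : ℝ → ℝ≥0∞) {a b c : ℝ} (hab : a ≤ b) (hbc : b ≤ c) :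
    ∫⁻ ε in Set.Ioc a c, f ε = (∫⁻ ε in Set.Ioc a b, f ε) + ∫⁻ ε in Set.Ioc b c, f ε := by
  rw [← lintegral_union measurableSet_Ioc (Set.Ioc_disjoint_Ioc_of_le le_rfl),
    Set.Ioc_union_Ioc_eq_Ioc hab hbc]

section MinorizingIntegral

variable {T : Type*} [MetricSpace T] [MeasurableSpace T] {m : Measure T} {φ : ℝ → ℝ} {R : ℝ}

def minorizingIntegral (m : Measure T) (φ : ℝ → ℝ) (x : T) (ρ : ℝ) : ℝ≥0∞ :=
  ∫⁻ ε in Set.Ioc 0 ρ, yinv φ (1 / m (closedBall x ε))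

theorem tauDist_eq_max (s t : T) : tauDist m φ s t =
    max (minorizingIntegral m φ s (dist s t)) (minorizingIntegral m φ t (dist s t)) :=
  rfl

variable [BoundedSpace T] [IsProbabilityMeasure m]

/-- Splitting `(0, r_k]` at `r_{k+1} < … < r_N` and bounding the integrand by `R^i` on
`(r_{i+1}, r_i)`, then summing by parts. -/
theorem ofReal_sum_rad_mul_pow_le_minorizingIntegral (hφ : IsYoungFunction φ) (hφ1 : φ 1 = 1)
    (hR : 1 ≤ R) (x : T) {k N : ℕ} (hkN : k ≤ N) :
    ENNReal.ofReal ((1 - R⁻¹) * ∑ i ∈ Finset.Icc k N, rad m φ R i x * R ^ i +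
        rad m φ R k x * R ^ k / R) ≤ minorizingIntegral m φ x (rad m φ R k x) := by
  have hR0 : R ≠ 0 := by positivity
  obtain ⟨n, rfl⟩ := Nat.exists_eq_add_of_le hkN
  induction n generalizing k with
  | zero =>
    have hval : (1 - R⁻¹) * ∑ i ∈ Finset.Icc k (k + 0), rad m φ R i x * R ^ i +
        rad m φ R k x * R ^ k / R = (rad m φ R k x - 0) * R ^ k := by
      simp only [add_zero, Finset.Icc_self, Finset.sum_singleton]
      field_simp
      ring
    rw [hval]
    exact ofReal_mul_le_setLIntegral_Ioc (by positivity) fun ε hε =>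
      ofReal_pow_le_yinv_of_lt_rad hφ hφ1 (by positivity) hε.1.le hε.2
  | succ n ih =>
    have hanti : rad m φ R (k + 1) x ≤ rad m φ R k x := rad_antitone hφ.1 hφ1 hR x k.le_succ
    have hsum := Finset.add_sum_Ioc_eq_sum_Icc (f := fun i => rad m φ R i x * R ^ i)
      (Nat.le_add_right k (n + 1))
    rw [← Finset.Icc_add_one_left_eq_Ioc, show k + (n + 1) = k + 1 + n by omega] at hsum
    have hval : (1 - R⁻¹) * ∑ i ∈ Finset.Icc k (k + (n + 1)), rad m φ R i x * R ^ i +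
        rad m φ R k x * R ^ k / R =
        ((1 - R⁻¹) * ∑ i ∈ Finset.Icc (k + 1) (k + 1 + n), rad m φ R i x * R ^ i +
          rad m φ R (k + 1) x * R ^ (k + 1) / R) +
        (rad m φ R k x - rad m φ R (k + 1) x) * R ^ k := by
      rw [show k + (n + 1) = k + 1 + n by omega, ← hsum]
      field_simp
      ring
    calc _ = _ := congrArg ENNReal.ofReal hval
      _ ≤ _ := ENNReal.ofReal_add_le
      _ ≤ minorizingIntegral m φ x (rad m φ R (k + 1) x) +
          ∫⁻ ε in Set.Ioc (rad m φ R (k + 1) x) (rad m φ R k x),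
            yinv φ (1 / m (closedBall x ε)) := by
        refine add_le_add (ih (Nat.le_add_right _ _)) ?_
        exact ofReal_mul_le_setLIntegral_Ioc (by positivity) fun ε hε =>
          ofReal_pow_le_yinv_of_lt_rad hφ hφ1 (by positivity)
            ((rad_nonneg _ _).trans hε.1.le) hε.2
      _ = _ := (setLIntegral_Ioc_add _ (rad_nonneg _ _) hanti).symm

theorem sub_one_mul_sum_rad_mul_pow_le (hφ : IsYoungFunction φ) (hφ1 : φ 1 = 1) (hR : 1 ≤ R)
    {x : T} {k N : ℕ} (hkN : k ≤ N) {ρ : ℝ} (hkρ : rad m φ R k x ≤ ρ)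
    (hfin : minorizingIntegral m φ x ρ ≠ ⊤) :
    (R - 1) * ∑ i ∈ Finset.Icc k N, rad m φ R i x * R ^ i ≤
      R * (minorizingIntegral m φ x ρ).toReal := by
  have h := (ofReal_sum_rad_mul_pow_le_minorizingIntegral hφ hφ1 hR x hkN).trans
    (lintegral_mono_set (Set.Ioc_subset_Ioc_right hkρ))
  have h' := (ENNReal.ofReal_le_iff_le_toReal hfin).1 h
  have hrk : 0 ≤ rad m φ R k x * R ^ k / R := by
    have := rad_nonneg (m := m) (φ := φ) (R := R) k x
    positivity
  calc (R - 1) * ∑ i ∈ Finset.Icc k N, rad m φ R i x * R ^ i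
      = R * ((1 - R⁻¹) * ∑ i ∈ Finset.Icc k N, rad m φ R i x * R ^ i) := by
        field_simp
    _ ≤ R * (minorizingIntegral m φ x ρ).toReal := by gcongr; linarith

/-- If moreover `ρ ≤ r_{k-1}(x)`, the integrand is at least `R^(k-1)` on `(r_k(x), ρ)`. -/
theorem sub_one_mul_sum_rad_mul_pow_add_le (hφ : IsYoungFunction φ) (hφ1 : φ 1 = 1)
    (hR : 1 ≤ R) {x : T} {k N : ℕ} (hk : 1 ≤ k) (hkN : k ≤ N) {ρ : ℝ}
    (hkρ : rad m φ R k x ≤ ρ) (hρk : ρ ≤ rad m φ R (k - 1) x)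
    (hfin : minorizingIntegral m φ x ρ ≠ ⊤) :
    (R - 1) * ∑ i ∈ Finset.Icc k N, rad m φ R i x * R ^ i + ρ * R ^ k ≤
      R * (minorizingIntegral m φ x ρ).toReal := by
  obtain ⟨j, rfl⟩ := Nat.exists_eq_add_of_le' hk
  have hR0 : R ≠ 0 := by positivity
  have h := calc
    ENNReal.ofReal ((1 - R⁻¹) * ∑ i ∈ Finset.Icc (j + 1) N, rad m φ R i x * R ^ i +
        rad m φ R (j + 1) x * R ^ (j + 1) / R + (ρ - rad m φ R (j + 1) x) * R ^ j)
      ≤ minorizingIntegral m φ x (rad m φ R (j + 1) x) +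
          ∫⁻ ε in Set.Ioc (rad m φ R (j + 1) x) ρ, yinv φ (1 / m (closedBall x ε)) := by
        refine ENNReal.ofReal_add_le.trans (add_le_add
          (ofReal_sum_rad_mul_pow_le_minorizingIntegral hφ hφ1 hR x hkN) ?_)
        exact ofReal_mul_le_setLIntegral_Ioc (by positivity) fun ε hε =>
          ofReal_pow_le_yinv_of_lt_rad hφ hφ1 (by positivity)
            ((rad_nonneg _ _).trans hε.1.le) (hε.2.trans_le hρk)
    _ = minorizingIntegral m φ x ρ := (setLIntegral_Ioc_add _ (rad_nonneg _ _) hkρ).symm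
  have h' := (ENNReal.ofReal_le_iff_le_toReal hfin).1 h
  calc (R - 1) * ∑ i ∈ Finset.Icc (j + 1) N, rad m φ R i x * R ^ i + ρ * R ^ (j + 1)
      = R * ((1 - R⁻¹) * ∑ i ∈ Finset.Icc (j + 1) N, rad m φ R i x * R ^ i +
        rad m φ R (j + 1) x * R ^ (j + 1) / R + (ρ - rad m φ R (j + 1) x) * R ^ j) := by
        field_simp
        ring
    _ ≤ R * (minorizingIntegral m φ x ρ).toReal := by gcongr

end MinorizingIntegral

section DyadicSum

variable {R : ℝ}

/-- `radl m φ R k l x` is `dyadicSum (rad m φ R · x) k l` by definition. -/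
def dyadicSum (r : ℕ → ℝ) (k l : ℕ) : ℝ :=
  ∑ i ∈ Finset.Icc k l, (2 : ℝ) ^ (i - k) * r i

theorem dyadicSum_mono {r r' : ℕ → ℝ} (h : ∀ i, r i ≤ r' i) (k l : ℕ) :
    dyadicSum r k l ≤ dyadicSum r' k l :=
  Finset.sum_le_sum fun i _ => by gcongr; exact h i

theorem dyadicSum_nonneg {r : ℕ → ℝ} (hr : ∀ i, 0 ≤ r i) (k l : ℕ) : 0 ≤ dyadicSum r k l :=
  Finset.sum_nonneg fun i _ => mul_nonneg (by positivity) (hr i)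

theorem dyadicSum_mul_pow_le (hR : 2 ≤ R) {r : ℕ → ℝ} (hr : ∀ i, 0 ≤ r i) (k l : ℕ) :
    dyadicSum r k l * R ^ k ≤ ∑ i ∈ Finset.Icc k l, r i * R ^ i := by
  rw [dyadicSum, Finset.sum_mul]
  refine Finset.sum_le_sum fun i hi => ?_
  have hki : k ≤ i := (Finset.mem_Icc.1 hi).1
  calc (2 : ℝ) ^ (i - k) * r i * R ^ k ≤ R ^ (i - k) * r i * R ^ k := by
        gcongr
        exact hr i
    _ = r i * R ^ i := by rw [mul_comm, ← mul_assoc, ← pow_add, Nat.add_sub_cancel' hki, mul_comm]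

theorem sub_two_mul_sum_two_pow_mul_pow_le (hR : 2 ≤ R) (a i : ℕ) :
    (R - 2) * ∑ k ∈ Finset.Icc a i, (2 : ℝ) ^ (i - k) * R ^ k ≤ R ^ (i + 1) := by
  rcases lt_or_ge i a with hia | hai
  · rw [Finset.Icc_eq_empty_of_lt hia, Finset.sum_empty, mul_zero]
    positivity
  -- the summands telescope: `(R - 2) 2^(i-k) R^k = g (k + 1) - g k` for `g k = 2^(i+1-k) R^k`
  set g : ℕ → ℝ := fun k => 2 ^ (i + 1 - k) * R ^ k
  have hterm : ∀ k ∈ Finset.Icc a i, (R - 2) * ((2 : ℝ) ^ (i - k) * R ^ k) = g (k + 1) - g k := by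
    intro k hk
    have : i + 1 - k = i - k + 1 := by have := (Finset.mem_Icc.1 hk).2; omega
    simp only [g, this, Nat.add_sub_add_right, pow_succ]
    ring
  rw [Finset.mul_sum, Finset.sum_congr rfl hterm, Finset.sum_Icc_sub hai]
  simp only [g, Nat.sub_self, pow_zero, one_mul, sub_le_self_iff]
  positivity

theorem sub_two_mul_sum_dyadicSum_mul_pow_le (hR : 2 ≤ R) {r : ℕ → ℝ} (hr : ∀ i, 0 ≤ r i)
    (a l : ℕ) :
    (R - 2) * ∑ k ∈ Finset.Icc a l, dyadicSum r k l * R ^ k ≤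
      R * ∑ i ∈ Finset.Icc a l, r i * R ^ i := by
  have hswap : ∑ k ∈ Finset.Icc a l, dyadicSum r k l * R ^ k =
      ∑ i ∈ Finset.Icc a l, r i * ∑ k ∈ Finset.Icc a i, (2 : ℝ) ^ (i - k) * R ^ k := by
    simp only [dyadicSum, Finset.sum_mul, Finset.mul_sum]
    rw [Finset.sum_comm' (t' := Finset.Icc a l) (s' := fun i => Finset.Icc a i)]
    · exact Finset.sum_congr rfl fun i _ => Finset.sum_congr rfl fun k _ => by ring
    · intro k i
      simp only [Finset.mem_Icc]
      omega
  rw [hswap, Finset.mul_sum, Finset.mul_sum]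
  refine Finset.sum_le_sum fun i _ => ?_
  calc (R - 2) * (r i * ∑ k ∈ Finset.Icc a i, (2 : ℝ) ^ (i - k) * R ^ k)
      = r i * ((R - 2) * ∑ k ∈ Finset.Icc a i, (2 : ℝ) ^ (i - k) * R ^ k) := by ring
    _ ≤ r i * R ^ (i + 1) := by gcongr; exacts [hr i, sub_two_mul_sum_two_pow_mul_pow_le hR a i]
    _ = R * (r i * R ^ i) := by ring

end DyadicSum

section Estimates

variable {R : ℝ}

/-- Summed against `R^i`, the recursion costs `3/(R-2)` of the whole sum, so the part below `b` is
absorbed as soon as `3 < R - 2`. -/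
theorem sub_one_mul_sub_five_mul_sum_le (hR : 5 < R) {μ : ℕ → ℝ} (hμ : ∀ i, 0 ≤ μ i) {d : ℝ}
    (hd : 0 ≤ d) {a b l : ℕ} (hab : a ≤ b) (hbl : b ≤ l)
    (hrec : ∀ i ∈ Finset.Ico a b, μ i ≤ 2 * d + 3 * dyadicSum μ (i + 1) l) :
    (R - 1) * (R - 5) * ∑ i ∈ Finset.Icc a l, μ i * R ^ i ≤
      (R - 2) * (2 * (d * R ^ b) + (R - 1) * ∑ i ∈ Finset.Icc b l, μ i * R ^ i) := by
  set S := ∑ i ∈ Finset.Icc a l, μ i * R ^ i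
  set E := ∑ i ∈ Finset.Icc b l, μ i * R ^ i
  set F := ∑ i ∈ Finset.Ico a b, μ i * R ^ i
  set G := ∑ i ∈ Finset.Ico a b, R ^ i
  set H := ∑ i ∈ Finset.Ico a b, dyadicSum μ (i + 1) l * R ^ i
  have hSFE : S = F + E := by
    simp only [S, E, F, ← Finset.Ico_add_one_right_eq_Icc]
    exact (Finset.sum_Ico_consecutive _ hab (by omega)).symm
  have hG : (R - 1) * G ≤ R ^ b := by
    rw [mul_comm, geom_sum_Ico_mul R hab, sub_le_self_iff]
    positivity
  have hH : (R - 2) * H ≤ S := by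
    have hshift : R * H ≤ ∑ k ∈ Finset.Icc a l, dyadicSum μ k l * R ^ k := by
      have hRH : R * H = ∑ i ∈ Finset.Ico a b, dyadicSum μ (i + 1) l * R ^ (i + 1) := by
        rw [Finset.mul_sum]
        exact Finset.sum_congr rfl fun i _ => by ring
      rw [hRH, Finset.sum_Ico_add' (fun k => dyadicSum μ k l * R ^ k)]
      refine Finset.sum_le_sum_of_subset_of_nonneg ?_ fun k _ _ => ?_
      · intro k hk
        simp only [Finset.mem_Ico, Finset.mem_Icc] at hk ⊢
        omega
      · exact mul_nonneg (dyadicSum_nonneg hμ _ _) (by positivity)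
    have := sub_two_mul_sum_dyadicSum_mul_pow_le (by linarith) hμ a l (R := R)
    nlinarith
  have hF : F ≤ 2 * d * G + 3 * H := by
    simp only [F, G, H, Finset.mul_sum, ← Finset.sum_add_distrib]
    refine Finset.sum_le_sum fun i hi => ?_
    nlinarith [hrec i hi, pow_pos (by linarith : (0 : ℝ) < R) i]
  have hR1 : 0 ≤ R - 1 := by linarith
  have hR2 : 0 ≤ R - 2 := by linarith
  linear_combination mul_le_mul_of_nonneg_left hF (mul_nonneg hR1 hR2) +
    2 * mul_le_mul_of_nonneg_left hG (mul_nonneg hd hR2) + 3 * mul_le_mul_of_nonneg_left hH hR1 +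
    (R - 1) * (R - 2) * hSFE

theorem sub_two_mul_le_of_dyadicSum (hR : 2 < R) {a b : ℕ → ℝ} (ha : ∀ i, 0 ≤ a i) (d D : ℝ)
    (τ l : ℕ) :
    (R - 2) * (min (dyadicSum a τ l + dyadicSum b τ l + d) D * R ^ τ +
        (∑ k ∈ Finset.Ico τ l, dyadicSum a k l * R ^ k +
          ∑ k ∈ Finset.Ico τ l, dyadicSum b k l * R ^ k)) ≤
      (R - 2) * (d * R ^ τ) + 4 * (R - 1) * ∑ i ∈ Finset.Icc τ l, max (a i) (b i) * R ^ i := by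
  set μ : ℕ → ℝ := fun i => max (a i) (b i)
  have hμ : ∀ i, 0 ≤ μ i := fun i => (ha i).trans (le_max_left _ _)
  set S := ∑ i ∈ Finset.Icc τ l, μ i * R ^ i
  set W := ∑ k ∈ Finset.Ico τ l, dyadicSum μ k l * R ^ k
  have haμ : ∀ k, dyadicSum a k l ≤ dyadicSum μ k l := fun k =>
    dyadicSum_mono (fun i => le_max_left _ _) k l
  have hbμ : ∀ k, dyadicSum b k l ≤ dyadicSum μ k l := fun k =>
    dyadicSum_mono (fun i => le_max_right _ _) k l
  have hsum : ∀ r : ℕ → ℝ, (∀ k, dyadicSum r k l ≤ dyadicSum μ k l) →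
      ∑ k ∈ Finset.Ico τ l, dyadicSum r k l * R ^ k ≤ W := fun r hr =>
    Finset.sum_le_sum fun k _ => by gcongr; exact hr k
  have hW : (R - 2) * W ≤ R * S := by
    refine le_trans ?_ (sub_two_mul_sum_dyadicSum_mul_pow_le hR.le hμ τ l)
    refine mul_le_mul_of_nonneg_left (Finset.sum_le_sum_of_subset_of_nonneg
      Finset.Ico_subset_Icc_self fun k _ _ => ?_) (by linarith)
    exact mul_nonneg (dyadicSum_nonneg hμ _ _) (by positivity)
  have hτ : dyadicSum μ τ l * R ^ τ ≤ S := dyadicSum_mul_pow_le hR.le hμ τ l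
  have hmin : min (dyadicSum a τ l + dyadicSum b τ l + d) D * R ^ τ ≤
      (2 * dyadicSum μ τ l + d) * R ^ τ := by
    gcongr
    exact (min_le_left _ D).trans (by linarith [haμ τ, hbμ τ])
  have hR2 : 0 ≤ R - 2 := by linarith
  linear_combination mul_le_mul_of_nonneg_left hmin hR2 +
    mul_le_mul_of_nonneg_left (hsum a haμ) hR2 + mul_le_mul_of_nonneg_left (hsum b hbμ) hR2 +
    2 * hW + 2 * mul_le_mul_of_nonneg_left hτ hR2

theorem sub_five_mul_le (hR : 5 < R) {P S X Y E J : ℝ}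
    (hP : (R - 2) * P ≤ (R - 2) * Y + 4 * (R - 1) * S)
    (hS : (R - 1) * (R - 5) * S ≤ (R - 2) * (2 * X + (R - 1) * E)) (hYX : Y ≤ X)
    (hX : X ≤ R * J) (hXE : X + (R - 1) * E ≤ 2 * R * J) :
    (R - 5) * P ≤ R * (R + 7) * J := by
  have hR2 : 0 < R - 2 := by linarith
  have hR1 : 0 < R - 1 := by linarith
  -- `(R - 5) P ≤ (R + 3) X + 4 (R - 1) E = 4 (X + (R - 1) E) + (R - 1) X`
  have h : (R - 1) * (R - 2) * ((R - 5) * P) ≤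
      (R - 1) * (R - 2) * (4 * (X + (R - 1) * E) + (R - 1) * X) := by
    nlinarith [mul_le_mul_of_nonneg_left hP (by positivity : (0 : ℝ) ≤ (R - 1) * (R - 5)),
      mul_le_mul_of_nonneg_left hYX (by positivity : (0 : ℝ) ≤ (R - 1) * (R - 2) * (R - 5))]
  have := le_of_mul_le_mul_left h (by positivity)
  nlinarith

theorem mul_add_seven_div_le (hR : 5 < R) :
    R * (R + 7) / (R - 5) ≤
      4 * R ^ 3 / ((R - 1) * (R - 2) * (R - 5)) + 3 * R ^ 2 / (2 * (R - 5)) := by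
  have hR5 : 0 < R - 5 := by linarith
  have hden : 0 < (R - 1) * (R - 2) * (R - 5) := by
    have : 0 < R - 1 := by linarith
    have : 0 < R - 2 := by linarith
    positivity
  rw [div_add_div _ _ hden.ne' (by positivity), div_le_div_iff₀ hR5 (by positivity)]
  nlinarith [mul_pos (mul_pos hR5 hR5) (by linarith : (0 : ℝ) < R), sq_nonneg (R - 5),
    mul_pos (mul_pos hR5 hR5) (mul_pos hR5 (by linarith : (0 : ℝ) < R))]

theorem ofReal_le_ofReal_mul_of_sub_five_mul_le (hR : 5 < R) {P : ℝ} {J : ℝ≥0∞} (hJ : J ≠ ⊤)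
    (h : (R - 5) * P ≤ R * (R + 7) * J.toReal) :
    ENNReal.ofReal P ≤
      ENNReal.ofReal (4 * R ^ 3 / ((R - 1) * (R - 2) * (R - 5)) + 3 * R ^ 2 / (2 * (R - 5))) *
        J := by
  have hA := mul_add_seven_div_le hR
  have hR5 : 0 < R - 5 := by linarith
  have hP : P ≤ R * (R + 7) / (R - 5) * J.toReal := by
    rw [div_mul_eq_mul_div, le_div_iff₀ hR5]
    linarith
  have hA0 := (by positivity : 0 ≤ R * (R + 7) / (R - 5)).trans hA
  rw [← ENNReal.ofReal_toReal hJ, ← ENNReal.ofReal_mul hA0]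
  exact ENNReal.ofReal_le_ofReal (hP.trans (mul_le_mul_of_nonneg_right hA toReal_nonneg))

end Estimates

section TauSet

variable {T : Type*} [MetricSpace T] [MeasurableSpace T] {m : Measure T} {φ : ℝ → ℝ} {R : ℝ}
  {l k : ℕ} {s t x : T}

theorem dist_lt_rad_of_mem_tauSet (hk : k ∈ tauSet m φ R l s t x) (hx : x = s ∨ x = t) :
    dist s t < rad m φ R (k - 1) x := by
  have hself : ∀ y : T, y ∈ closedBall y (radl m φ R k l y) := fun y =>
    mem_closedBall_self (dyadicSum_nonneg (fun i => rad_nonneg i y) k l)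
  have hsub := hk.2 x (hself x)
  rcases hx with rfl | rfl
  · simpa [dist_comm] using hsub (Or.inr (hself t))
  · simpa using hsub (Or.inl (hself s))

theorem le_of_isGreatest_tauSet [BoundedSpace T] [IsProbabilityMeasure m]
    (hφ : MonotoneOn φ (Set.Ici 0)) (hφ1 : φ 1 = 1) (hR : 1 ≤ R) {τ β : ℕ}
    (hτ : IsGreatest (tauSet m φ R l s t x) τ) (hx : x = s ∨ x = t)
    (hβ : rad m φ R β x ≤ dist s t) : τ ≤ β :=
  not_lt.1 fun h => (dist_lt_rad_of_mem_tauSet hτ.1 hx).not_ge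
    ((rad_antitone hφ hφ1 hR x (by omega)).trans hβ)

variable [OpensMeasurableSpace T] [BoundedSpace T] [IsProbabilityMeasure m]

theorem rad_le_of_succ_not_mem_tauSet (hφ : MonotoneOn φ (Set.Ici 0)) (hφ1 : φ 1 = 1)
    (hR : 1 ≤ R) (hx : x = s ∨ x = t) {y : T} (hy : y = s ∨ y = t)
    (hk : k + 1 ∉ tauSet m φ R l s t x) :
    rad m φ R k y ≤
      2 * dist s t + 3 * max (radl m φ R (k + 1) l s) (radl m φ R (k + 1) l t) := by
  set M := max (radl m φ R (k + 1) l s) (radl m φ R (k + 1) l t)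
  have hpair : ∀ {p q : T}, (p = s ∨ p = t) → (q = s ∨ q = t) → dist p q ≤ dist s t := by
    rintro p q (rfl | rfl) (rfl | rfl) <;> simp [dist_comm]
  have hradl : ∀ {p : T}, (p = s ∨ p = t) → radl m φ R (k + 1) l p ≤ M := by
    rintro p (rfl | rfl)
    exacts [le_max_left _ _, le_max_right _ _]
  simp only [tauSet, Set.mem_ofPred_eq, not_and, not_forall, Set.not_subset] at hk
  obtain ⟨u, hu, v, hv, hvu⟩ := hk (Nat.le_add_left 1 k)
  rw [mem_closedBall] at hu
  rw [add_tsub_cancel_right, mem_ball, not_lt] at hvu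
  obtain ⟨z, hz, hvz⟩ : ∃ z, (z = s ∨ z = t) ∧ dist v z ≤ M := by
    rcases hv with hv | hv
    exacts [⟨s, Or.inl rfl, (mem_closedBall.1 hv).trans (hradl (Or.inl rfl))⟩,
      ⟨t, Or.inr rfl, (mem_closedBall.1 hv).trans (hradl (Or.inr rfl))⟩]
  have hux : dist u x ≤ M := hu.trans (hradl hx)
  calc rad m φ R k y ≤ rad m φ R k u + dist u y := rad_le_rad_add_dist hφ hφ1 hR k u y
    _ ≤ dist v u + (dist u x + dist x y) := add_le_add hvu (dist_triangle u x y)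
    _ ≤ (dist v z + dist z x + dist x u) + (dist u x + dist x y) := by
        gcongr; exact dist_triangle4 v z x u
    _ ≤ (M + dist s t + M) + (M + dist s t) := by
        rw [dist_comm x u]
        gcongr
        exacts [hpair hz hx, hpair hx hy]
    _ = 2 * dist s t + 3 * M := by ring

theorem max_rad_le_of_min_le (hφ : MonotoneOn φ (Set.Ici 0)) (hφ1 : φ 1 = 1) (hR : 1 ≤ R)
    {τs τt : ℕ} (hτs : IsGreatest (tauSet m φ R l s t s) τs)
    (hτt : IsGreatest (tauSet m φ R l s t t) τt) (hk : min τs τt ≤ k) :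
    max (rad m φ R k s) (rad m φ R k t) ≤
      2 * dist s t + 3 * dyadicSum (fun i => max (rad m φ R i s) (rad m φ R i t)) (k + 1) l := by
  obtain ⟨x, hx, hxτ⟩ : ∃ x, (x = s ∨ x = t) ∧ IsGreatest (tauSet m φ R l s t x) (min τs τt) := by
    rcases min_choice τs τt with h | h
    exacts [⟨s, Or.inl rfl, by rwa [h]⟩, ⟨t, Or.inr rfl, by rwa [h]⟩]
  have hnot : k + 1 ∉ tauSet m φ R l s t x := fun h => by
    have := hxτ.2 h
    omega
  refine (max_le (rad_le_of_succ_not_mem_tauSet hφ hφ1 hR hx (Or.inl rfl) hnot)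
    (rad_le_of_succ_not_mem_tauSet hφ hφ1 hR hx (Or.inr rfl) hnot)).trans ?_
  gcongr
  exact max_le (dyadicSum_mono (fun _ => le_max_left _ _) _ _)
    (dyadicSum_mono (fun _ => le_max_right _ _) _ _)

end TauSet

section Budget

variable {T : Type*} [MetricSpace T] [MeasurableSpace T] [BoundedSpace T] {m : Measure T}
  [IsProbabilityMeasure m] {φ : ℝ → ℝ} {R : ℝ} {s t : T}

theorem exists_rad_le_dist_le_rad (hφ : MonotoneOn φ (Set.Ici 0)) (hφ1 : φ 1 = 1) (hR : 1 ≤ R)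
    {c l : ℕ}
    (hc : (dist s t < diam (Set.univ : Set T) ∧
            ∃ a b : ℕ, 1 ≤ a ∧ 1 ≤ b ∧
              rad m φ R a s ≤ dist s t ∧ dist s t < rad m φ R (a - 1) s ∧
              rad m φ R b t ≤ dist s t ∧ dist s t < rad m φ R (b - 1) t ∧
              c = max a b) ∨
          (dist s t = diam (Set.univ : Set T) ∧ c = 0))
    (hl : c < l) :
    ∃ β, 1 ≤ β ∧ β ≤ l ∧ rad m φ R β s ≤ dist s t ∧ rad m φ R β t ≤ dist s t ∧
      (dist s t ≤ rad m φ R (β - 1) s ∨ dist s t ≤ rad m φ R (β - 1) t) := by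
  rcases hc with ⟨-, a, b, ha, hb, has, has', hbt, hbt', rfl⟩ | ⟨hdiam, rfl⟩
  · rcases le_total a b with hab | hab
    · exact ⟨b, hb, by omega, (rad_antitone hφ hφ1 hR s hab).trans has, hbt, Or.inr hbt'.le⟩
    · exact ⟨a, ha, by omega, has, (rad_antitone hφ hφ1 hR t hab).trans hbt, Or.inl has'.le⟩
  · exact ⟨1, le_rfl, hl, hdiam ▸ rad_le_diam hφ hφ1 hR 1 s, hdiam ▸ rad_le_diam hφ hφ1 hR 1 t,
      Or.inl hdiam.le⟩

/-- The tail sums from `β` on are paid for by `τ_{m,φ}(s,t)`; the point with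
`d(s,t) ≤ r_{β-1}` also pays for `d(s,t) R^β`. -/
theorem dist_mul_pow_add_sum_le (hφ : IsYoungFunction φ) (hφ1 : φ 1 = 1) (hR : 1 ≤ R)
    (hfin : tauDist m φ s t ≠ ⊤) {β l : ℕ} (hβ1 : 1 ≤ β) (hβl : β ≤ l)
    (hs : rad m φ R β s ≤ dist s t) (ht : rad m φ R β t ≤ dist s t)
    (hspecial : dist s t ≤ rad m φ R (β - 1) s ∨ dist s t ≤ rad m φ R (β - 1) t) :
    dist s t * R ^ β ≤ R * (tauDist m φ s t).toReal ∧
      dist s t * R ^ β + (R - 1) * ∑ i ∈ Finset.Icc β l, max (rad m φ R i s) (rad m φ R i t) * R ^ i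
        ≤ 2 * R * (tauDist m φ s t).toReal := by
  set J := (tauDist m φ s t).toReal
  set E : T → ℝ := fun x => ∑ i ∈ Finset.Icc β l, rad m φ R i x * R ^ i
  have hbound : ∀ x, (x = s ∨ x = t) → minorizingIntegral m φ x (dist s t) ≤ tauDist m φ s t := by
    rintro x (rfl | rfl) <;> rw [tauDist_eq_max]
    exacts [le_max_left _ _, le_max_right _ _]
  have hfin' : ∀ x, (x = s ∨ x = t) → minorizingIntegral m φ x (dist s t) ≠ ⊤ := fun x hx =>
    ne_top_of_le_ne_top hfin (hbound x hx)
  have hJ : ∀ x, (x = s ∨ x = t) → R * (minorizingIntegral m φ x (dist s t)).toReal ≤ R * J :=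
    fun x hx =>
    mul_le_mul_of_nonneg_left (ENNReal.toReal_mono hfin (hbound x hx)) (by linarith)
  have htail : ∀ x, (x = s ∨ x = t) → rad m φ R β x ≤ dist s t → (R - 1) * E x ≤ R * J :=
    fun x hx hxβ => (sub_one_mul_sum_rad_mul_pow_le hφ hφ1 hR hβl hxβ (hfin' x hx)).trans (hJ x hx)
  have hfull : ∀ x, (x = s ∨ x = t) → rad m φ R β x ≤ dist s t →
      dist s t ≤ rad m φ R (β - 1) x → dist s t * R ^ β + (R - 1) * E x ≤ R * J :=
    fun x hx hxβ hxβ' => by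
      have := sub_one_mul_sum_rad_mul_pow_add_le hφ hφ1 hR hβ1 hβl hxβ hxβ' (hfin' x hx)
      linarith [hJ x hx]
  have hE0 : ∀ x, 0 ≤ (R - 1) * E x := fun x => mul_nonneg (by linarith)
    (Finset.sum_nonneg fun i _ => mul_nonneg (rad_nonneg _ _) (by positivity))
  have hmax : (R - 1) * ∑ i ∈ Finset.Icc β l, max (rad m φ R i s) (rad m φ R i t) * R ^ i ≤
      (R - 1) * E s + (R - 1) * E t := by
    rw [← mul_add, ← Finset.sum_add_distrib]
    refine mul_le_mul_of_nonneg_left (Finset.sum_le_sum fun i _ => ?_) (by linarith)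
    rw [← add_mul]
    gcongr
    exact max_le_add_of_nonneg (rad_nonneg _ _) (rad_nonneg _ _)
  have hEs := htail s (Or.inl rfl) hs
  have hEt := htail t (Or.inr rfl) ht
  rcases hspecial with h | h
  · have := hfull s (Or.inl rfl) hs h
    constructor <;> linarith [hE0 s]
  · have := hfull t (Or.inr rfl) ht h
    constructor <;> linarith [hE0 t]

end Budget

/-- Lemma 8 of the paper. -/
theorem statement18 (T : Type) [MetricSpace T] [CompactSpace T]
    [MeasurableSpace T] [BorelSpace T]
    (m : Measure T) (hm : IsProbabilityMeasure m)
    (φ : ℝ → ℝ) (hφ : IsYoungFunction φ) (hφ1 : φ 1 = 1)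
    (R : ℝ) (hR : 5 < R)
    (s t : T) (hτfin : tauDist m φ s t ≠ ⊤)
    (c : ℕ)
    (hc : (dist s t < Metric.diam (Set.univ : Set T) ∧
            ∃ a b : ℕ, 1 ≤ a ∧ 1 ≤ b ∧
              rad m φ R a s ≤ dist s t ∧ dist s t < rad m φ R (a - 1) s ∧
              rad m φ R b t ≤ dist s t ∧ dist s t < rad m φ R (b - 1) t ∧
              c = max a b) ∨
          (dist s t = Metric.diam (Set.univ : Set T) ∧ c = 0))
    (l : ℕ) (hl : c < l)
    (τs τt : ℕ)
    (hτs : IsGreatest (tauSet m φ R l s t s) τs)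
    (hτt : IsGreatest (tauSet m φ R l s t t) τt) :
    ENNReal.ofReal
        (min (radl m φ R (min τs τt) l s + radl m φ R (min τs τt) l t + dist s t)
            (Metric.diam (Set.univ : Set T)) * R ^ (min τs τt) +
          (∑ k ∈ Finset.Ico (min τs τt) l, radl m φ R k l s * R ^ k +
            ∑ k ∈ Finset.Ico (min τs τt) l, radl m φ R k l t * R ^ k)) ≤
      ENNReal.ofReal
          (4 * R ^ 3 / ((R - 1) * (R - 2) * (R - 5)) + 3 * R ^ 2 / (2 * (R - 5))) *
        tauDist m φ s t := by
  have := hm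
  have hR1 : (1 : ℝ) ≤ R := by linarith
  obtain ⟨β, hβ1, hβl, hs, ht, hspecial⟩ := exists_rad_le_dist_le_rad hφ.1 hφ1 hR1 hc hl
  have hτβ : min τs τt ≤ β :=
    (min_le_left _ _).trans (le_of_isGreatest_tauSet hφ.1 hφ1 hR1 hτs (Or.inl rfl) hs)
  have hS := sub_one_mul_sub_five_mul_sum_le hR (fun i => (rad_nonneg i s).trans (le_max_left _ _))
    dist_nonneg hτβ hβl fun i hi =>
      max_rad_le_of_min_le hφ.1 hφ1 hR1 hτs hτt (Finset.mem_Ico.1 hi).1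
  have hP := sub_two_mul_le_of_dyadicSum (R := R) (by linarith) (fun i => rad_nonneg i s)
    (dist s t) (diam (Set.univ : Set T)) (min τs τt) l (a := fun i => rad m φ R i s)
    (b := fun i => rad m φ R i t)
  have hYX := mul_le_mul_of_nonneg_left (pow_le_pow_right₀ hR1 hτβ) (dist_nonneg (x := s) (y := t))
  obtain ⟨hX, hXE⟩ := dist_mul_pow_add_sum_le hφ hφ1 hR1 hτfin hβ1 hβl hs ht hspecial
  exact ofReal_le_ofReal_mul_of_sub_five_mul_le hR hτfin (sub_five_mul_le hR hP hS hYX hX hXE)
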